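/- The set R_sharp equals the set of all (x, y, z) ∈ ℝ^η × ℝ × ℝ^d with x ∈ D and z ∈ Δ^d such that y ≥ w^k · x + b^k for every k = 1,…,d, and for every α ∈ ℝ^η, y ≤ α · x + Σ_{k=1}^d ( max_{x' ∈ D} (w^k − α) · x' + b^k ) z_k. -/

import Mathlib

/-!
The inclusion `⊆` is weak duality: a summand `x̃ᵏ = zₖ x'` with `x' ∈ D` contributes
`zₖ (wᵏ - α) ⬝ x' ≤ zₖ max_D (wᵏ - α) ⬝ ·` to `y - α ⬝ x`.

For `⊇`, the pairs `(∑ x̃ᵏ, ∑ wᵏ ⬝ x̃ᵏ)` with `x̃ᵏ ∈ zₖ D` form a compact convex set `T`, which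
meets the vertical line over `x` (take `x̃ᵏ = zₖ x`). If `y - ∑ bᵏ zₖ` lay strictly above `T` on
that line, a hyperplane separating the point from `T` would be non-vertical, hence the graph of
`v ↦ α ⬝ v + const`; evaluating at the point of `T` built from maximisers of `(wᵏ - α) ⬝ ·` on `D`
contradicts the dual inequality for this `α`.
-/
open scoped Pointwise

noncomputable section

/-- Dot product on `Fin n → ℝ`. -/
def dotp {n : ℕ} (w x : Fin n → ℝ) : ℝ := ∑ i, w i * x i

/-- The affine function `f^k(x) = w^k ⬝ x + b^k`. -/
def affK {η d : ℕ} (w : Fin d → Fin η → ℝ) (b : Fin d → ℝ) (k : Fin d) (x : Fin η → ℝ) : ℝ :=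
  dotp (w k) x + b k

/-- The set `R_sharp`. -/
def RsharpSet {η d : ℕ} (D : Set (Fin η → ℝ)) (w : Fin d → Fin η → ℝ) (b : Fin d → ℝ) :
    Set ((Fin η → ℝ) × ℝ × (Fin d → ℝ)) :=
  {p | p.1 ∈ D ∧ p.2.2 ∈ stdSimplex ℝ (Fin d)
    ∧ (∀ k, affK w b k p.1 ≤ p.2.1)
    ∧ ∃ xt : Fin d → Fin η → ℝ, (∀ k, xt k ∈ p.2.2 k • D) ∧ p.1 = ∑ k, xt k
        ∧ p.2.1 ≤ ∑ k, (dotp (w k) (xt k) + b k * p.2.2 k)}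

lemma dotp_eq_dotProduct {n : ℕ} (w x : Fin n → ℝ) : dotp w x = w ⬝ᵥ x := rfl

section Polyhedron

variable {ι n : Type*} [Fintype n] (A : ι → n → ℝ) (c : ι → ℝ)

theorem isClosed_setOf_forall_dotProduct_le : IsClosed {x | ∀ i, A i ⬝ᵥ x ≤ c i} := by
  simp only [Set.ofPred_forall]
  exact isClosed_iInter fun i => isClosed_le (continuous_const.dotProduct continuous_id)
    continuous_const

theorem convex_setOf_forall_dotProduct_le : Convex ℝ {x | ∀ i, A i ⬝ᵥ x ≤ c i} := by
  simp only [Set.ofPred_forall]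
  exact convex_iInter fun i => convex_halfSpace_le (dotProductBilin ℝ ℝ (A i)).isLinear (c i)

end Polyhedron

theorem StrongDual.exists_dotProduct_add_mul {n : Type*} [Fintype n]
    (f : StrongDual ℝ ((n → ℝ) × ℝ)) :
    ∃ c : n → ℝ, ∀ p, f p = c ⬝ᵥ p.1 + p.2 * f (0, 1) := by
  classical
  refine ⟨(dotProductEquiv ℝ n).symm (f.comp (ContinuousLinearMap.inl ℝ _ ℝ)).toLinearMap,
    fun p => ?_⟩
  have hsymm (g : Module.Dual ℝ (n → ℝ)) (v : n → ℝ) : (dotProductEquiv ℝ n).symm g ⬝ᵥ v = g v :=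
    LinearMap.congr_fun ((dotProductEquiv ℝ n).apply_symm_apply g) v
  have hsplit : p = (p.1, 0) + p.2 • ((0 : n → ℝ), (1 : ℝ)) := by simp
  conv_lhs => rw [hsplit, map_add, map_smul, smul_eq_mul]
  rw [hsymm]
  rfl

theorem exists_le_snd_mem_of_forall_dual {n : Type*} [Fintype n] {T : Set ((n → ℝ) × ℝ)}
    (hTc : IsClosed T) (hTconv : Convex ℝ T) {x : n → ℝ} {y s₀ : ℝ} (hs₀ : (x, s₀) ∈ T)
    (hdual : ∀ a : n → ℝ, ∃ p ∈ T, y - a ⬝ᵥ x ≤ p.2 - a ⬝ᵥ p.1) :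
    ∃ s, y ≤ s ∧ (x, s) ∈ T := by
  by_contra! hbelow
  obtain ⟨f, u, hfT, hfxy⟩ := geometric_hahn_banach_closed_point hTconv hTc (hbelow y le_rfl)
  obtain ⟨c, hf⟩ := f.exists_dotProduct_add_mul
  set β := f (0, 1)
  have hs₀y : s₀ < y := lt_of_not_ge fun h => hbelow s₀ h hs₀
  -- the separating hyperplane is not vertical: `(x, s₀) ∈ T` lies below `(x, y)`
  have hβ : 0 < β := by
    have := hfT _ hs₀
    rw [hf] at this hfxy
    nlinarith
  obtain ⟨p, hpT, hp⟩ := hdual (-β⁻¹ • c)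
  have hfp := hfT p hpT
  rw [hf] at hfp hfxy
  simp only [neg_smul, neg_dotProduct, smul_dotProduct, smul_eq_mul, sub_neg_eq_add] at hp
  have hscaled := mul_le_mul_of_nonneg_left hp hβ.le
  rw [mul_add, mul_add, mul_inv_cancel_left₀ hβ.ne', mul_inv_cancel_left₀ hβ.ne'] at hscaled
  linarith

section SupportFunction

variable {n : Type*} [Fintype n] {D : Set (n → ℝ)}

theorem le_mul_sSup_image_dotProduct (hD : IsCompact D) {t : ℝ} (ht : 0 ≤ t) {v : n → ℝ}
    (hv : v ∈ t • D) (u : n → ℝ) : u ⬝ᵥ v ≤ t * sSup ((u ⬝ᵥ ·) '' D) := by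
  obtain ⟨x, hx, rfl⟩ := hv
  rw [dotProduct_smul, smul_eq_mul]
  have hbdd := (hD.image (continuous_const.dotProduct continuous_id : Continuous (u ⬝ᵥ ·))).bddAbove
  exact mul_le_mul_of_nonneg_left (le_csSup hbdd ⟨x, hx, rfl⟩) ht

theorem IsCompact.exists_sSup_image_dotProduct_eq (hD : IsCompact D) (hne : D.Nonempty)
    (u : n → ℝ) : ∃ x ∈ D, sSup ((u ⬝ᵥ ·) '' D) = u ⬝ᵥ x := by
  obtain ⟨x, hx, hmax⟩ :=
    (hD.image (continuous_const.dotProduct continuous_id)).sSup_mem (hne.image (u ⬝ᵥ ·))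
  exact ⟨x, hx, hmax.symm⟩

end SupportFunction

namespace RsharpSet

variable {η d : ℕ} (w : Fin d → Fin η → ℝ) (b : Fin d → ℝ) {D : Set (Fin η → ℝ)}

def aggregate : (Fin d → Fin η → ℝ) →ₗ[ℝ] (Fin η → ℝ) × ℝ where
  toFun xt := (∑ k, xt k, ∑ k, w k ⬝ᵥ xt k)
  map_add' xt yt := by simp [Finset.sum_add_distrib]
  map_smul' r xt := by simp [Finset.smul_sum, Finset.mul_sum]

theorem sum_le_dual_of_mem_smul (hD : IsCompact D) {z : Fin d → ℝ} (hz : 0 ≤ z)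
    {xt : Fin d → Fin η → ℝ} (hxt : ∀ k, xt k ∈ z k • D) (a : Fin η → ℝ) :
    ∑ k, (w k ⬝ᵥ xt k + b k * z k) ≤
      a ⬝ᵥ ∑ k, xt k + ∑ k, (sSup ((fun x' => (w k - a) ⬝ᵥ x') '' D) + b k) * z k := by
  rw [dotProduct_sum, ← Finset.sum_add_distrib]
  refine Finset.sum_le_sum fun k _ => ?_
  have := le_mul_sSup_image_dotProduct hD (hz k) (hxt k) (w k - a)
  rw [sub_dotProduct] at this
  linarith

theorem exists_mem_smul_of_forall_le_dual (hD : IsCompact D) (hDconv : Convex ℝ D)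
    {x : Fin η → ℝ} (hx : x ∈ D) {y : ℝ} {z : Fin d → ℝ} (hz : z ∈ stdSimplex ℝ (Fin d))
    (hy : ∀ a : Fin η → ℝ,
      y ≤ a ⬝ᵥ x + ∑ k, (sSup ((fun x' => (w k - a) ⬝ᵥ x') '' D) + b k) * z k) :
    ∃ xt : Fin d → Fin η → ℝ, (∀ k, xt k ∈ z k • D) ∧ x = ∑ k, xt k
      ∧ y ≤ ∑ k, (w k ⬝ᵥ xt k + b k * z k) := by
  set K : Set (Fin d → Fin η → ℝ) := Set.univ.pi fun k => z k • D
  have hK : IsCompact K := isCompact_univ_pi fun k => hD.smul (z k)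
  have hKconv : Convex ℝ K := convex_pi fun k _ => hDconv.smul (z k)
  have hdiag : (x, ∑ k, w k ⬝ᵥ (z k • x)) ∈ aggregate w '' K :=
    ⟨fun k => z k • x, fun k _ => Set.smul_mem_smul_set hx,
      by simp [aggregate, ← Finset.sum_smul, hz.2]⟩
  have hdual (a : Fin η → ℝ) : ∃ p ∈ aggregate w '' K,
      y - ∑ k, b k * z k - a ⬝ᵥ x ≤ p.2 - a ⬝ᵥ p.1 := by
    choose x₀ hx₀ hx₀max using fun k => hD.exists_sSup_image_dotProduct_eq ⟨x, hx⟩ (w k - a)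
    refine ⟨aggregate w (fun k => z k • x₀ k),
      Set.mem_image_of_mem _ fun k _ => Set.smul_mem_smul_set (hx₀ k), ?_⟩
    have hya := hy a
    simp only [hx₀max, add_mul, Finset.sum_add_distrib] at hya
    have hsum : ∑ k, w k ⬝ᵥ z k • x₀ k - ∑ k, a ⬝ᵥ z k • x₀ k
        = ∑ k, (w k - a) ⬝ᵥ x₀ k * z k := by
      rw [← Finset.sum_sub_distrib]
      refine Finset.sum_congr rfl fun k _ => ?_
      rw [dotProduct_smul, dotProduct_smul, sub_dotProduct, smul_eq_mul, smul_eq_mul]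
      ring
    simp only [aggregate, LinearMap.coe_mk, AddHom.coe_mk, dotProduct_sum, hsum]
    linarith
  obtain ⟨s, hys, xt, hxt, hxts⟩ := exists_le_snd_mem_of_forall_dual
    (hK.image (aggregate w).continuous_of_finiteDimensional).isClosed (hKconv.linear_image _)
    hdiag hdual
  refine ⟨xt, fun k => hxt k (Set.mem_univ k), (congrArg Prod.fst hxts).symm, ?_⟩
  have := congrArg Prod.snd hxts
  simp only [aggregate, LinearMap.coe_mk, AddHom.coe_mk] at this
  rw [Finset.sum_add_distrib, this]
  linarith

end RsharpSet

/-- The paper's `max_{x' ∈ D}` is written as `sSup`; it is attained because `D` is compact. -/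
theorem stmt4_general {η d : ℕ}
    (w : Fin d → Fin η → ℝ) (b : Fin d → ℝ)
    (D : Set (Fin η → ℝ))
    (hDpoly : ∃ (m : ℕ) (A : Fin m → Fin η → ℝ) (c : Fin m → ℝ),
      D = {x | ∀ i, dotp (A i) x ≤ c i})
    (hDbd : Bornology.IsBounded D) :
    RsharpSet D w b = {p : (Fin η → ℝ) × ℝ × (Fin d → ℝ) |
      p.1 ∈ D ∧ p.2.2 ∈ stdSimplex ℝ (Fin d)
      ∧ (∀ k, dotp (w k) p.1 + b k ≤ p.2.1)
      ∧ (∀ a : Fin η → ℝ,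
          p.2.1 ≤ dotp a p.1
            + ∑ k, (sSup ((fun x' => dotp (w k - a) x') '' D) + b k) * p.2.2 k)} := by
  obtain ⟨m, A, c, hDeq⟩ := hDpoly
  simp only [dotp_eq_dotProduct] at hDeq
  have hD : IsCompact D :=
    Metric.isCompact_of_isClosed_isBounded (hDeq ▸ isClosed_setOf_forall_dotProduct_le A c) hDbd
  have hDconv : Convex ℝ D := hDeq ▸ convex_setOf_forall_dotProduct_le A c
  ext ⟨x, y, z⟩
  simp only [RsharpSet, affK, dotp_eq_dotProduct, Set.mem_ofPred_eq]
  refine and_congr_right fun hx => and_congr_right fun hz => and_congr_right fun _ =>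
    ⟨?_, RsharpSet.exists_mem_smul_of_forall_le_dual w b hD hDconv hx hz⟩
  rintro ⟨xt, hxt, rfl, hy⟩ a
  exact hy.trans (RsharpSet.sum_le_dual_of_mem_smul w b hD hz.1 hxt a)

/-- The dual characterization of `R_sharp`.  Since `D` is a nonempty compact set, the maximum
over `D` is attained and coincides with `sSup` of the corresponding image set. -/
theorem stmt4 {η d : ℕ} (hη : 1 ≤ η) (hd : 1 ≤ d)
    (w : Fin d → Fin η → ℝ) (b : Fin d → ℝ)
    (D : Set (Fin η → ℝ))
    (hDpoly : ∃ (m : ℕ) (A : Fin m → Fin η → ℝ) (c : Fin m → ℝ),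
      D = {x | ∀ i, dotp (A i) x ≤ c i})
    (hDne : D.Nonempty) (hDbd : Bornology.IsBounded D) :
    RsharpSet D w b = {p : (Fin η → ℝ) × ℝ × (Fin d → ℝ) |
      p.1 ∈ D ∧ p.2.2 ∈ stdSimplex ℝ (Fin d)
      ∧ (∀ k, dotp (w k) p.1 + b k ≤ p.2.1)
      ∧ (∀ a : Fin η → ℝ,
          p.2.1 ≤ dotp a p.1
            + ∑ k, (sSup ((fun x' => dotp (w k - a) x') '' D) + b k) * p.2.2 k)} :=
  stmt4_general w b D hDpoly hDbd
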